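/- arXiv:2306.17127 — 4 statements merged into one kernel-verified Lean document; each statement's English description precedes it below -/
import Mathlib

section
/- Let K ⊆ ℝ^d be an origin-symmetric convex body whose Minkowski functional ‖·‖_K is continuously differentiable on ℝ^d∖{0}, and let r > 0. If ‖∇‖x‖_K‖₂ = 1/r for every x ∈ ℝ^d∖{0}, then K is the closed Euclidean ball of radius r centered at the origin. -/
open Set

def IsConvexBody (d : ℕ) (K : Set (EuclideanSpace ℝ (Fin d))) : Prop :=
  IsCompact K ∧ Convex ℝ K ∧ (interior K).Nonempty

/-- Euler's identity for the (positively homogeneous) gauge function. -/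
lemma gauge_euler_aux {E : Type*} [NormedAddCommGroup E] [NormedSpace ℝ E] (K : Set E) (x : E)
    (hdiff : DifferentiableAt ℝ (gauge K) x) :
    fderiv ℝ (gauge K) x x = gauge K x := by
  have h1 : HasDerivAt (fun t : ℝ => gauge K (t • x)) (fderiv ℝ (gauge K) x x) 1 := by
    have hx : HasDerivAt (fun t : ℝ => t • x) ((1:ℝ) • x) 1 := (hasDerivAt_id (1:ℝ)).smul_const x
    have hfd : HasFDerivAt (gauge K) (fderiv ℝ (gauge K) x) ((1:ℝ) • x) := by
      simpa using hdiff.hasFDerivAt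
    have := hfd.comp_hasDerivAt (x := (1:ℝ)) hx
    simp only [one_smul] at this; exact this
  have h2 : HasDerivAt (fun t : ℝ => gauge K (t • x)) (gauge K x) 1 := by
    have heq : (fun t : ℝ => t * gauge K x) =ᶠ[nhds (1:ℝ)] fun t => gauge K (t • x) := by
      filter_upwards [eventually_gt_nhds one_pos] with t ht
      rw [gauge_smul_of_nonneg ht.le, smul_eq_mul]
    have h3 : HasDerivAt (fun t : ℝ => t * gauge K x) (gauge K x) 1 := by
      simpa using (hasDerivAt_id (1:ℝ)).mul_const (gauge K x)
    exact h3.congr_of_eventuallyEq heq.symm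
  exact h1.unique h2

lemma fderiv_eq_inner_gradient_aux {E : Type*} [NormedAddCommGroup E] [InnerProductSpace ℝ E]
    [CompleteSpace E] (f : E → ℝ) (x y : E) :
    fderiv ℝ f x y = inner ℝ (gradient f x) y := by
  unfold gradient
  rw [← InnerProductSpace.toDual_apply_apply, LinearIsometryEquiv.apply_symm_apply]

lemma sq_eq_of_nonneg_aux {s r : ℝ} (hs : 0 ≤ s) (hr : 0 < r) (h : s ^ 2 = r ^ 2) : s = r := by
  have hfac : (s - r) * (s + r) = 0 := by ring_nf; nlinarith
  rcases mul_eq_zero.mp hfac with h1 | h1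
  · linarith
  · nlinarith

/-- If the gradient of the Minkowski functional of an origin-symmetric convex
body has constant Euclidean norm `1/r` away from the origin, then the body is
the closed Euclidean ball of radius `r`. -/
theorem eikonal_gauge_is_ball (d : ℕ) (K : Set (EuclideanSpace ℝ (Fin d)))
    (hbody : IsConvexBody d K) (hsymm : K = -K)
    (hC1 : ContDiffOn ℝ 1 (gauge K) {(0 : EuclideanSpace ℝ (Fin d))}ᶜ)
    (r : ℝ) (hr : 0 < r)
    (hgrad : ∀ x : EuclideanSpace ℝ (Fin d), x ≠ 0 →
      ‖gradient (gauge K) x‖ = 1 / r) :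
    K = Metric.closedBall (0 : EuclideanSpace ℝ (Fin d)) r := by
  obtain ⟨hcomp, hconv, hint⟩ := hbody
  let E := EuclideanSpace ℝ (Fin d)
  have hclosed : IsClosed K := hcomp.isClosed
  -- 0 is in the interior of K
  have h0mem : (0 : E) ∈ interior K := by
    obtain ⟨y, hy⟩ := hint
    have hy' : -y ∈ interior K := by
      have h1 : interior (-K) = -interior K := by
        rw [← Set.neg_preimage, ← Set.neg_preimage]
        exact ((Homeomorph.neg E).preimage_interior K).symm
      rw [hsymm, h1, Set.mem_neg, neg_neg]
      exact hy
    have := hconv.interior hy hy' (by norm_num : (0:ℝ) ≤ 1/2) (by norm_num : (0:ℝ) ≤ 1/2)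
      (by norm_num)
    simpa [smul_neg] using this
  have hnhds : K ∈ nhds (0 : E) := mem_interior_iff_mem_nhds.mp h0mem
  have habs : Absorbent ℝ K := absorbent_nhds_zero hnhds
  have hbdd : Bornology.IsVonNBounded ℝ K := NormedSpace.isVonNBounded_iff ℝ |>.mpr hcomp.isBounded
  have hmemiff : ∀ x : E, x ∈ K ↔ gauge K x ≤ 1 := by
    intro x
    constructor
    · exact gauge_le_one_of_mem
    · intro h
      have h2 := (gauge_le_one_iff_mem_closure hconv hnhds).mp h
      rwa [hclosed.closure_eq] at h2
  -- differentiability facts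
  have hdiff : ∀ x : E, x ≠ 0 → HasStrictFDerivAt (gauge K) (fderiv ℝ (gauge K) x) x := by
    intro x hx
    have hcd : ContDiffAt ℝ 1 (gauge K) x :=
      (hC1 x (by simpa using hx)).contDiffAt (isOpen_compl_singleton.mem_nhds (by simpa using hx))
    exact hcd.hasStrictFDerivAt one_ne_zero
  -- every point on the level set {gauge = 1} which is extremal for ‖·‖² has norm r
  have hkey : ∀ x₀ : E, gauge K x₀ = 1 →
      IsLocalExtrOn (fun x : E => ‖x‖ ^ 2) {x | gauge K x = gauge K x₀} x₀ → ‖x₀‖ = r := by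
    intro x₀ hx₀ hext
    have hx0ne : x₀ ≠ 0 := by
      intro h; rw [h, gauge_zero] at hx₀; norm_num at hx₀
    obtain ⟨a, b, hab, hsum⟩ := hext.exists_multipliers_of_hasStrictFDerivAt_1d
      (hdiff x₀ hx0ne) (hasStrictFDerivAt_norm_sq x₀)
    set v : E := gradient (gauge K) x₀ with hv
    have hfd : ∀ y : E, fderiv ℝ (gauge K) x₀ y = inner ℝ v y :=
      fun y => fderiv_eq_inner_gradient_aux (gauge K) x₀ y
    have heuler : fderiv ℝ (gauge K) x₀ x₀ = 1 := by
      rw [gauge_euler_aux K x₀ (hdiff x₀ hx0ne).differentiableAt, hx₀]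
    have hvx : (inner ℝ v x₀ : ℝ) = 1 := by rw [← hfd]; exact heuler
    have hnv : ‖v‖ = 1 / r := hgrad x₀ hx0ne
    have e1 := congrArg (fun L : E →L[ℝ] ℝ => L x₀) hsum
    have e2 := congrArg (fun L : E →L[ℝ] ℝ => L v) hsum
    simp only [ContinuousLinearMap.add_apply, ContinuousLinearMap.smul_apply,
      ContinuousLinearMap.zero_apply, smul_eq_mul, innerSL_apply_apply,
      ContinuousLinearMap.coe_smul', Pi.smul_apply] at e1 e2
    rw [heuler] at e1
    rw [hfd v] at e2
    have hxx : (inner ℝ x₀ x₀ : ℝ) = ‖x₀‖ ^ 2 := real_inner_self_eq_norm_sq x₀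
    have hvv : (inner ℝ v v : ℝ) = (1/r) ^ 2 := by
      rw [real_inner_self_eq_norm_sq, hnv]
    have hx0v : (inner ℝ x₀ v : ℝ) = 1 := by rw [real_inner_comm]; exact hvx
    rw [hxx] at e1
    rw [hvv, hx0v] at e2
    -- e1 : a * 1 + b * (2 • ‖x₀‖²) = 0, e2 : a * (1/r)² + b * (2 • 1) = 0
    have hb : b ≠ 0 := by
      intro hb0
      rw [hb0] at e2
      have ha : a = 0 := by
        have hrne : (1/r : ℝ) ≠ 0 := by positivity
        simp at e2
        rcases e2 with e2 | e2
        · exact e2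
        · exact absurd e2 (by positivity)
      exact hab (by simp [ha, hb0])
    have hsq : ‖x₀‖ ^ 2 = r ^ 2 := by
      have hrne : (r : ℝ) ≠ 0 := ne_of_gt hr
      simp only [smul_eq_mul, nsmul_eq_mul, Nat.cast_ofNat, mul_one] at e1 e2
      field_simp at e2
      -- from e1 : a + 2 b ‖x₀‖² = 0 ; e2 : a + 2 b r² = 0
      have : b * (2 * ‖x₀‖ ^ 2) = b * (2 * r ^ 2) := by nlinarith [sq_nonneg r]
      have h2 : ‖x₀‖ ^ 2 = r ^ 2 := by
        have := mul_left_cancel₀ hb this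
        linarith
      exact h2
    exact sq_eq_of_nonneg_aux (norm_nonneg _) hr hsq
  -- the level set S = {gauge = 1}
  set S : Set E := {x : E | gauge K x = 1} with hS
  have hScl : IsClosed S := by
    have : Continuous (gauge K) := continuous_gauge hconv hnhds
    exact isClosed_eq this continuous_const
  have hSsubK : S ⊆ K := fun x hx => (hmemiff x).mpr (le_of_eq hx)
  have hScomp : IsCompact S := hcomp.of_isClosed_subset hScl hSsubK
  -- every point of S has norm r (using min and max of ‖·‖² on S)
  have hnormS : ∀ x ∈ S, ‖x‖ = r := by
    intro x hx
    have hSne : S.Nonempty := ⟨x, hx⟩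
    have hcont : ContinuousOn (fun y : E => ‖y‖ ^ 2) S :=
      (continuous_norm.pow 2).continuousOn
    obtain ⟨xM, hxM, hmax⟩ := hScomp.exists_isMaxOn hSne hcont
    obtain ⟨xm, hxm, hmin⟩ := hScomp.exists_isMinOn hSne hcont
    have hSM : {y : E | gauge K y = gauge K xM} = S := by
      ext y; simp [hS, hxM.out]
    have hSm : {y : E | gauge K y = gauge K xm} = S := by
      ext y; simp [hS, hxm.out]
    have hM : ‖xM‖ = r := hkey xM hxM (Or.inr (by rw [hSM]; exact hmax.localize))
    have hm : ‖xm‖ = r := hkey xm hxm (Or.inl (by rw [hSm]; exact hmin.localize))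
    have h1 : ‖x‖ ^ 2 ≤ r ^ 2 := by have := hmax hx; simpa [hM] using this
    have h2 : r ^ 2 ≤ ‖x‖ ^ 2 := by have := hmin hx; simpa [hm] using this
    exact sq_eq_of_nonneg_aux (norm_nonneg _) hr (le_antisymm h1 h2)
  -- gauge is ‖·‖ / r
  have hval : ∀ x : E, x ≠ 0 → gauge K x = ‖x‖ / r := by
    intro x hx
    have hc : 0 < gauge K x := (gauge_pos habs hbdd).mpr hx
    have h1 : gauge K ((gauge K x)⁻¹ • x) = 1 := by
      rw [gauge_smul_of_nonneg (inv_nonneg.mpr hc.le), smul_eq_mul]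
      field_simp
    have h2 := hnormS _ h1
    rw [norm_smul, norm_inv, Real.norm_eq_abs, abs_of_pos hc] at h2
    field_simp at h2 ⊢
    linarith [h2]
  ext x
  rw [hmemiff x, Metric.mem_closedBall, dist_zero_right]
  rcases eq_or_ne x 0 with rfl | hx
  · simp [gauge_zero, hr.le]
  · rw [hval x hx, div_le_one hr]
end

section
/- Let K ⊆ ℝ^d be an origin-symmetric convex body whose Minkowski functional ‖·‖_K is continuously differentiable on ℝ^d∖{0}. Suppose there exist real numbers γ_0, γ_1, …, γ_n, not all zero, such that Σ_{i=0}^n γ_i ‖∇‖x‖_K‖₂^{2i} = 0 for every x ∈ ℝ^d∖{0}. Then K is a Euclidean ball: there exists r > 0 with K = {x ∈ ℝ^d : ‖x‖₂ ≤ r}. -/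
open Set

open InnerProductSpace RealInnerProductSpace Polynomial in
private lemma const_on_preconnected_aux {E : Type*} [TopologicalSpace E] {s : Set E}
    (hs : IsPreconnected s) {f : E → ℝ} (hf : ContinuousOn f s) {R : Set ℝ} (hR : R.Finite)
    (hmem : ∀ x ∈ s, f x ∈ R) {x y : E} (hx : x ∈ s) (hy : y ∈ s) : f x = f y := by
  by_contra hne
  have himg : IsPreconnected (f '' s) := hs.image f hf
  have hfin : (f '' s).Finite := hR.subset (Set.image_subset_iff.2 hmem)
  rcases lt_or_gt_of_ne hne with h | h
  · exact (hfin.subset (himg.ordConnected.out ⟨x, hx, rfl⟩ ⟨y, hy, rfl⟩)).not_infinite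
      (Set.Icc_infinite h)
  · exact (hfin.subset (himg.ordConnected.out ⟨y, hy, rfl⟩ ⟨x, hx, rfl⟩)).not_infinite
      (Set.Icc_infinite h)

set_option maxHeartbeats 1000000 in
/-- If the Euclidean norm of the gradient of the Minkowski functional of an
origin-symmetric convex body satisfies a nontrivial polynomial equation with
constant coefficients, then the body is a Euclidean ball. -/
theorem gradient_norm_poly_is_ball (d n : ℕ) (K : Set (EuclideanSpace ℝ (Fin d)))
    (hbody : IsConvexBody d K) (hsymm : K = -K)
    (hC1 : ContDiffOn ℝ 1 (gauge K) {(0 : EuclideanSpace ℝ (Fin d))}ᶜ)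
    (γ : Fin (n + 1) → ℝ) (hγ : γ ≠ 0)
    (heq : ∀ x : EuclideanSpace ℝ (Fin d), x ≠ 0 →
      ∑ i : Fin (n + 1), γ i * ‖gradient (gauge K) x‖ ^ (2 * (i : ℕ)) = 0) :
    ∃ r > (0:ℝ), K = Metric.closedBall (0 : EuclideanSpace ℝ (Fin d)) r := by
  classical
  obtain ⟨hcomp, hconv, hint⟩ := hbody
  -- trivial dimension
  rcases Nat.eq_zero_or_pos d with hd | hd
  · subst hd
    refine ⟨1, one_pos, ?_⟩
    have hsub : Subsingleton (EuclideanSpace ℝ (Fin 0)) := by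
      constructor; intro a b
      ext i; exact absurd i.2 (by omega)
    obtain ⟨y, hy⟩ := hint
    have hyK : y ∈ K := interior_subset hy
    ext x
    simp only [Metric.mem_closedBall]
    constructor
    · intro _
      rw [Subsingleton.elim x (0:EuclideanSpace ℝ (Fin 0)), dist_self]
      norm_num
    · intro _; rwa [Subsingleton.elim x y]
  -- Main case: d ≥ 1
  -- Basic facts
  have hsymm' : ∀ z ∈ K, -z ∈ K := by
    intro z hz
    rw [hsymm]; exact Set.neg_mem_neg.2 hz
  have h0 : (0 : EuclideanSpace ℝ (Fin d)) ∈ interior K := by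
    obtain ⟨y, hy⟩ := hint
    have hny : -y ∈ interior K := by
      apply interior_maximal (t := -interior K)
      · intro z hz
        rw [hsymm]
        exact Set.neg_subset_neg.2 interior_subset hz
      · exact (isOpen_interior).neg
      · exact Set.neg_mem_neg.2 hy
    have := (hconv.interior) hy hny (by norm_num : (0:ℝ) ≤ 1/2)
      (by norm_num : (0:ℝ) ≤ 1/2) (by norm_num)
    simpa [smul_neg] using this
  have hK_nhds : K ∈ nhds (0 : EuclideanSpace ℝ (Fin d)) := mem_interior_iff_mem_nhds.1 h0
  have habs : Absorbent ℝ K := absorbent_nhds_zero hK_nhds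
  have hbdd : Bornology.IsVonNBounded ℝ K := hcomp.totallyBounded.isVonNBounded ℝ
  have hgpos : ∀ x : EuclideanSpace ℝ (Fin d), x ≠ 0 → 0 < gauge K x := fun x hx =>
    (gauge_pos habs hbdd).2 hx
  have hdiff : ∀ x : EuclideanSpace ℝ (Fin d), x ≠ 0 → DifferentiableAt ℝ (gauge K) x := by
    intro x hx
    exact (hC1.contDiffAt ((isOpen_compl_singleton).mem_nhds (by simpa using hx))).differentiableAt
      one_ne_zero
  -- inner product formula for the gradient
  have hinner : ∀ x y : EuclideanSpace ℝ (Fin d),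
      (inner ℝ (gradient (gauge K) x) y : ℝ) = fderiv ℝ (gauge K) x y := by
    intro x y
    simp [gradient, InnerProductSpace.toDual_symm_apply]
  have hgradnorm : ∀ x : EuclideanSpace ℝ (Fin d),
      ‖gradient (gauge K) x‖ = ‖fderiv ℝ (gauge K) x‖ := by
    intro x
    simp [gradient]
  -- Euler's identity
  have euler : ∀ x : EuclideanSpace ℝ (Fin d), x ≠ 0 →
      fderiv ℝ (gauge K) x x = gauge K x := by
    intro x hx
    have hsm : HasDerivAt (fun t : ℝ => t • x) x 1 := by
      simpa using (hasDerivAt_id (1:ℝ)).smul_const x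
    have hf : HasFDerivAt (gauge K) (fderiv ℝ (gauge K) x) ((1:ℝ) • x) := by
      rw [one_smul]; exact (hdiff x hx).hasFDerivAt
    have h1 : HasDerivAt (fun t : ℝ => gauge K (t • x)) (fderiv ℝ (gauge K) x x) 1 := by
      exact hf.comp_hasDerivAt 1 hsm
    have hmul : HasDerivAt (fun t : ℝ => t * gauge K x) (gauge K x) 1 := by
      simpa using (hasDerivAt_id (1:ℝ)).mul_const (gauge K x)
    have h2 : HasDerivAt (fun t : ℝ => gauge K (t • x)) (gauge K x) 1 := by
      apply hmul.congr_of_eventuallyEq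
      filter_upwards [eventually_gt_nhds one_pos] with t ht
      rw [gauge_smul_of_nonneg ht.le, smul_eq_mul]
    exact h1.unique h2
  -- the gradient norm function
  set g : EuclideanSpace ℝ (Fin d) → ℝ := fun x => ‖gradient (gauge K) x‖ with hg
  -- continuity of g away from 0
  have hcontg : ContinuousOn g {(0 : EuclideanSpace ℝ (Fin d))}ᶜ := by
    have h1 : ContinuousOn (fderiv ℝ (gauge K)) {(0 : EuclideanSpace ℝ (Fin d))}ᶜ :=
      hC1.continuousOn_fderiv_of_isOpen isOpen_compl_singleton le_rfl
    have := h1.norm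
    simp only [hg]
    simpa only [hgradnorm] using this
  -- g is even
  have hgaugeeven : (fun x : EuclideanSpace ℝ (Fin d) => gauge K (-x)) = gauge K := by
    funext x
    exact gauge_neg hsymm' x
  have hgeven : ∀ y : EuclideanSpace ℝ (Fin d), y ≠ 0 → g (-y) = g y := by
    intro y hy
    have hgradneg : gradient (gauge K) (-y) = - gradient (gauge K) y := by
      have hGy : HasGradientAt (gauge K) (gradient (gauge K) y) y :=
        (hdiff y hy).hasGradientAt
      have hFy : HasFDerivAt (gauge K)
          (InnerProductSpace.toDual ℝ _ (gradient (gauge K) y)) y :=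
        hasGradientAt_iff_hasFDerivAt.1 hGy
      have hneg : HasFDerivAt (fun x : EuclideanSpace ℝ (Fin d) => -x)
          (-(ContinuousLinearMap.id ℝ (EuclideanSpace ℝ (Fin d)))) (-y) := by
        exact (hasFDerivAt_id (-y : EuclideanSpace ℝ (Fin d))).neg
      have hFy' : HasFDerivAt (gauge K)
          (InnerProductSpace.toDual ℝ _ (gradient (gauge K) y))
          ((fun x : EuclideanSpace ℝ (Fin d) => -x) (-y)) := by
        simpa using hFy
      have hcompd := hFy'.comp (-y) hneg
      have hEq : (fun x : EuclideanSpace ℝ (Fin d) => gauge K (-x)) = gauge K := hgaugeeven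
      rw [show (gauge K ∘ fun x : EuclideanSpace ℝ (Fin d) => -x) = gauge K by
        funext x; exact gauge_neg hsymm' x] at hcompd
      have hdual : (InnerProductSpace.toDual ℝ
            (EuclideanSpace ℝ (Fin d)) (gradient (gauge K) y)).comp
            (-(ContinuousLinearMap.id ℝ (EuclideanSpace ℝ (Fin d))))
          = InnerProductSpace.toDual ℝ _ (-(gradient (gauge K) y)) := by
        ext z
        simp [inner_neg_neg, real_inner_comm]
      rw [hdual] at hcompd
      have : HasGradientAt (gauge K) (-(gradient (gauge K) y)) (-y) :=
        hasGradientAt_iff_hasFDerivAt.2 hcompd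
      exact this.gradient
    simp only [hg, hgradneg, norm_neg]
  -- the polynomial and its roots
  obtain ⟨i₀, hi₀⟩ := Function.ne_iff.1 hγ
  set P : Polynomial ℝ := ∑ i : Fin (n+1), Polynomial.C (γ i) * Polynomial.X ^ (2*(i:ℕ)) with hP
  have hPne : P ≠ 0 := by
    intro h
    apply hi₀
    have hc : P.coeff (2*(i₀:ℕ)) = γ i₀ := by
      rw [hP, Polynomial.finset_sum_coeff]
      rw [Finset.sum_eq_single i₀]
      · simp [Polynomial.coeff_C_mul, Polynomial.coeff_X_pow]
      · intro b _ hb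
        have hne : (2*(i₀:ℕ)) ≠ 2*(b:ℕ) := by
          intro hcon
          exact hb (Fin.ext (by omega)).symm
        simp [Polynomial.coeff_C_mul, Polynomial.coeff_X_pow, hne]
      · simp
    rw [h] at hc
    simpa using hc.symm
  have hRfin : {t : ℝ | P.IsRoot t}.Finite := Polynomial.finite_setOf_isRoot hPne
  have hroot : ∀ x : EuclideanSpace ℝ (Fin d), x ≠ 0 → g x ∈ {t : ℝ | P.IsRoot t} := by
    intro x hx
    have : P.eval (g x) = ∑ i : Fin (n+1), γ i * (g x) ^ (2*(i:ℕ)) := by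
      rw [hP]
      simp [Polynomial.eval_finset_sum]
    simpa [Polynomial.IsRoot, this] using heq x hx
  -- g is constant on the complement of the origin
  have hseg : ∀ x y : EuclideanSpace ℝ (Fin d), x ≠ 0 → y ≠ 0 →
      (0 : EuclideanSpace ℝ (Fin d)) ∉ segment ℝ x y → g x = g y := by
    intro x y hx hy h0seg
    have hsub : segment ℝ x y ⊆ {(0:EuclideanSpace ℝ (Fin d))}ᶜ := by
      intro z hz
      simp only [Set.mem_compl_iff, Set.mem_singleton_iff]
      rintro rfl; exact h0seg hz
    exact const_on_preconnected_aux (convex_segment x y).isPreconnected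
      (hcontg.mono hsub) hRfin
      (fun z hz => hroot z (fun hz0 => h0seg (hz0 ▸ hz)))
      (left_mem_segment ℝ x y) (right_mem_segment ℝ x y)
  have hgconst : ∀ x : EuclideanSpace ℝ (Fin d), x ≠ 0 →
      ∀ y : EuclideanSpace ℝ (Fin d), y ≠ 0 → g x = g y := by
    intro x hx y hy
    by_cases hxy : (0 : EuclideanSpace ℝ (Fin d)) ∈ segment ℝ x y
    · have hxy' : (0 : EuclideanSpace ℝ (Fin d)) ∉ segment ℝ x (-y) := by
        intro hxy2
        obtain ⟨a, b, ha, hb, hab, hab0⟩ := hxy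
        obtain ⟨a', b', ha', hb', hab', hab0'⟩ := hxy2
        have h1 : (b'*a + b*a') • x =
            (b' • (a•x + b•y)) + b • (a'•x + b'•(-y)) := by module
        rw [hab0, hab0'] at h1
        simp only [smul_zero, add_zero] at h1
        rcases smul_eq_zero.1 h1 with hc | hx0
        · have h2 : b'*a = 0 ∧ b*a' = 0 :=
            ⟨by nlinarith [mul_nonneg hb' ha, mul_nonneg hb ha'],
             by nlinarith [mul_nonneg hb' ha, mul_nonneg hb ha']⟩
          rcases mul_eq_zero.1 h2.1 with h3 | h3
          · have ha'1 : a' = 1 := by linarith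
            exact hx (by simpa [h3, ha'1] using hab0')
          · have hb1 : b = 1 := by linarith
            exact hy (by simpa [h3, hb1] using hab0)
        · exact hx hx0
      calc g x = g (-y) := hseg x (-y) hx (neg_ne_zero.2 hy) hxy'
        _ = g y := hgeven y hy
    · exact hseg x y hx hy hxy
  -- extrema of the gauge on the unit sphere
  have : Nontrivial (EuclideanSpace ℝ (Fin d)) := by
    refine ⟨⟨EuclideanSpace.single ⟨0, hd⟩ 1, 0, ?_⟩⟩
    intro h
    have := congrArg (fun v : EuclideanSpace ℝ (Fin d) => ‖v‖) h
    simp [EuclideanSpace.norm_single] at this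
  have hsphne : (Metric.sphere (0 : EuclideanSpace ℝ (Fin d)) 1).Nonempty :=
    NormedSpace.sphere_nonempty.2 zero_le_one
  have hgaugec : Continuous (gauge K) := continuous_gauge hconv hK_nhds
  obtain ⟨x₀, hx₀s, hx₀min⟩ := (isCompact_sphere (0 : EuclideanSpace ℝ (Fin d)) 1).exists_isMinOn
    hsphne hgaugec.continuousOn
  obtain ⟨x₁, hx₁s, hx₁max⟩ := (isCompact_sphere (0 : EuclideanSpace ℝ (Fin d)) 1).exists_isMaxOn
    hsphne hgaugec.continuousOn
  have hx₀norm : ‖x₀‖ = 1 := mem_sphere_zero_iff_norm.1 hx₀s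
  have hx₁norm : ‖x₁‖ = 1 := mem_sphere_zero_iff_norm.1 hx₁s
  have hx₀0 : x₀ ≠ 0 := by intro h; rw [h] at hx₀norm; simpa using hx₀norm
  have hx₁0 : x₁ ≠ 0 := by intro h; rw [h] at hx₁norm; simpa using hx₁norm
  set m := gauge K x₀ with hm
  set M := gauge K x₁ with hM
  have hmpos : 0 < m := hgpos x₀ hx₀0
  have hMpos : 0 < M := hgpos x₁ hx₁0
  have hlow : ∀ x : EuclideanSpace ℝ (Fin d), m * ‖x‖ ≤ gauge K x := by
    intro x
    rcases eq_or_ne x 0 with rfl | hx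
    · simp [gauge_zero]
    · have hxpos : 0 < ‖x‖ := norm_pos_iff.2 hx
      have hu : ‖x‖⁻¹ • x ∈ Metric.sphere (0 : EuclideanSpace ℝ (Fin d)) 1 := by
        simp [norm_smul, abs_of_pos (inv_pos.2 hxpos), inv_mul_cancel₀ hxpos.ne']
      have h1 : m ≤ gauge K (‖x‖⁻¹ • x) := isMinOn_iff.1 hx₀min _ hu
      rw [gauge_smul_of_nonneg (inv_nonneg.2 hxpos.le), smul_eq_mul, inv_mul_eq_div] at h1
      exact (le_div_iff₀ hxpos).1 h1
  have hupp : ∀ x : EuclideanSpace ℝ (Fin d), gauge K x ≤ M * ‖x‖ := by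
    intro x
    rcases eq_or_ne x 0 with rfl | hx
    · simp [gauge_zero]
    · have hxpos : 0 < ‖x‖ := norm_pos_iff.2 hx
      have hu : ‖x‖⁻¹ • x ∈ Metric.sphere (0 : EuclideanSpace ℝ (Fin d)) 1 := by
        simp [norm_smul, abs_of_pos (inv_pos.2 hxpos), inv_mul_cancel₀ hxpos.ne']
      have h1 : gauge K (‖x‖⁻¹ • x) ≤ M := isMaxOn_iff.1 hx₁max _ hu
      rw [gauge_smul_of_nonneg (inv_nonneg.2 hxpos.le), smul_eq_mul, inv_mul_eq_div] at h1
      exact (div_le_iff₀ hxpos).1 h1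
  -- at a local extremum of x ↦ gauge x ^ 2 - gauge z ^ 2 * ⟪x,x⟫, the gradient is gauge z • z
  have keyfd : ∀ z : EuclideanSpace ℝ (Fin d), z ≠ 0 →
      IsLocalExtr (fun x : EuclideanSpace ℝ (Fin d) =>
        gauge K x * gauge K x - (gauge K z * gauge K z) * (inner ℝ x x : ℝ)) z →
      gradient (gauge K) z = gauge K z • z := by
    intro z hz hext
    have hcpos : 0 < gauge K z := hgpos z hz
    have hdz := (hdiff z hz).hasFDerivAt
    set c := gauge K z with hc
    set D := fderiv ℝ (gauge K) z with hDdef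
    have hF : HasFDerivAt (fun x => gauge K x * gauge K x) (c • D + c • D) z := hdz.mul hdz
    have hG : HasFDerivAt (fun x : EuclideanSpace ℝ (Fin d) => (inner ℝ x x : ℝ))
        ((fderivInnerCLM ℝ (z, z)).comp
          ((ContinuousLinearMap.id ℝ _).prod (ContinuousLinearMap.id ℝ _))) z :=
      (hasFDerivAt_id z).inner ℝ (hasFDerivAt_id z)
    have hH : HasFDerivAt (fun x : EuclideanSpace ℝ (Fin d) =>
        gauge K x * gauge K x - (c * c) * (inner ℝ x x : ℝ))
        ((c • D + c • D) - (c * c) • ((fderivInnerCLM ℝ (z, z)).comp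
          ((ContinuousLinearMap.id ℝ _).prod (ContinuousLinearMap.id ℝ _)))) z :=
      hF.sub (hG.const_mul (c * c))
    have h0' := hext.fderiv_eq_zero
    rw [hH.fderiv] at h0'
    have happ : ∀ y, D y = c * (inner ℝ z y : ℝ) := by
      intro y
      have h1 : c * D y + c * D y - (c * c) * ((inner ℝ z y : ℝ) + (inner ℝ y z : ℝ)) = 0 := by
        have h2 := congrArg (fun L : EuclideanSpace ℝ (Fin d) →L[ℝ] ℝ => L y) h0'
        simpa [fderivInnerCLM_apply] using h2
      have h3 : (inner ℝ y z : ℝ) = (inner ℝ z y : ℝ) := real_inner_comm z y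
      have h4 : (2 * c) * (D y) = (2 * c) * (c * (inner ℝ z y : ℝ)) := by
        linear_combination h1 + (c * c) * h3
      exact mul_left_cancel₀ (by positivity) h4
    apply ext_inner_right ℝ
    intro v
    rw [hinner z v, real_inner_smul_left]
    exact happ v
  -- identify the constant gradient norm with m and M
  have hgradx₀ : gradient (gauge K) x₀ = m • x₀ := by
    apply keyfd x₀ hx₀0
    left
    apply Filter.Eventually.of_forall
    intro y
    have hy1 : (m * ‖y‖) * (m * ‖y‖) ≤ gauge K y * gauge K y :=
      mul_self_le_mul_self (mul_nonneg hmpos.le (norm_nonneg _)) (hlow y)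
    simp only [real_inner_self_eq_norm_mul_norm]
    rw [← hm, hx₀norm]
    nlinarith
  have hgradx₁ : gradient (gauge K) x₁ = M • x₁ := by
    apply keyfd x₁ hx₁0
    right
    apply Filter.Eventually.of_forall
    intro y
    have hy1 : gauge K y * gauge K y ≤ (M * ‖y‖) * (M * ‖y‖) :=
      mul_self_le_mul_self (gauge_nonneg _) (hupp y)
    simp only [real_inner_self_eq_norm_mul_norm]
    rw [← hM, hx₁norm]
    nlinarith
  have hgx₀ : g x₀ = m := by
    simp only [hg, hgradx₀, norm_smul, Real.norm_eq_abs, abs_of_pos hmpos, hx₀norm, mul_one]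
  have hgx₁ : g x₁ = M := by
    simp only [hg, hgradx₁, norm_smul, Real.norm_eq_abs, abs_of_pos hMpos, hx₁norm, mul_one]
  have hmM : m = M := by
    rw [← hgx₀, ← hgx₁]
    exact hgconst x₀ hx₀0 x₁ hx₁0
  -- conclusion
  refine ⟨m⁻¹, inv_pos.2 hmpos, ?_⟩
  ext x
  rw [Metric.mem_closedBall, dist_zero_right]
  have hxK : x ∈ K ↔ gauge K x ≤ 1 := by
    conv_lhs => rw [← hcomp.isClosed.closure_eq]
    exact (gauge_le_one_iff_mem_closure hconv hK_nhds).symm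
  rw [hxK]
  have hgauge_eq : gauge K x = m * ‖x‖ := le_antisymm (by rw [hmM]; exact hupp x) (hlow x)
  rw [hgauge_eq, mul_comm, ← le_div_iff₀ hmpos, one_div]
end

section
/- Let K ⊆ L be a field extension and let v : L → ℝ ∪ {∞} be a valuation on L that is trivial on K (i.e., v(a) = 0 for every a ∈ K∖{0}). If a family (x_i)_{i∈I} of nonzero elements of L spans a finite-dimensional K-vector subspace of L, then the set of values {v(x_i) : i ∈ I} ⊆ ℝ is finite. -/
section aux
variable {L : Type*} [Field L] (v : L → WithTop ℝ)
  (h0 : ∀ x : L, v x = ⊤ ↔ x = 0)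
  (hmul : ∀ x y : L, v (x * y) = v x + v y)
  (hadd : ∀ x y : L, min (v x) (v y) ≤ v (x + y))

include h0 hmul in
lemma val_one : v 1 = 0 := by
  have h1 : v 1 ≠ ⊤ := by simp [h0]
  obtain ⟨r, hr⟩ := WithTop.ne_top_iff_exists.mp h1
  have := hmul 1 1
  rw [one_mul, ← hr] at this
  have : r = r + r := by exact_mod_cast this
  have : r = 0 := by linarith
  rw [← hr, this]; norm_num

include h0 hmul in
lemma val_neg (x : L) : v (-x) = v x := by
  have hm1 : v (-1 : L) ≠ ⊤ := by simp [h0]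
  obtain ⟨r, hr⟩ := WithTop.ne_top_iff_exists.mp hm1
  have h2 := hmul (-1) (-1)
  rw [neg_mul_neg, one_mul, val_one v h0 hmul, ← hr] at h2
  have : r + r = 0 := by exact_mod_cast h2.symm
  have hr0 : r = 0 := by linarith
  have : v (-x) = v (-1) + v x := by rw [← hmul]; ring_nf
  rw [this, ← hr, hr0]; simp

include h0 hmul hadd in
lemma val_add_eq (x y : L) (h : v x < v y) : v (x + y) = v x := by
  refine le_antisymm ?_ (by simpa [min_eq_left h.le] using hadd x y)
  have := hadd (x + y) (-y)
  rw [add_neg_cancel_right, val_neg v h0 hmul] at this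
  by_contra hc
  push_neg at hc
  exact absurd this (not_le.mpr (lt_min hc h))

set_option linter.unusedSectionVars false in
include h0 hmul hadd in
lemma val_sum_lt {ι : Type*} (z : ι → L) (t : Finset ι) (c : WithTop ℝ)
    (hc : c ≠ ⊤) (h : ∀ j ∈ t, c < v (z j)) : c < v (∑ j ∈ t, z j) := by
  classical
  induction t using Finset.induction with
  | empty => simp [(h0 0).mpr rfl, lt_top_iff_ne_top, hc]
  | insert _ _ ha ih =>
    rename_i a s
    rw [Finset.sum_insert ha]
    have h1 := h a (Finset.mem_insert_self a s)
    have h2 := ih fun j hj => h j (Finset.mem_insert_of_mem hj)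
    exact lt_of_lt_of_le (lt_min h1 h2) (hadd _ _)
end aux

/-- If a family of nonzero elements of a valued field extension spans a
finite-dimensional subspace over the base field (on which the valuation is
trivial), then the family takes only finitely many valuation values. -/
theorem finite_valuations_of_finiteDimensional_span {K L : Type*} [Field K]
    [Field L] [Algebra K L] (v : L → WithTop ℝ)
    (h0 : ∀ x : L, v x = ⊤ ↔ x = 0)
    (hmul : ∀ x y : L, v (x * y) = v x + v y)
    (hadd : ∀ x y : L, min (v x) (v y) ≤ v (x + y))
    (htriv : ∀ a : K, a ≠ 0 → v (algebraMap K L a) = 0)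
    {I : Type*} (x : I → L) (hx : ∀ i, x i ≠ 0)
    (hfin : FiniteDimensional K (Submodule.span K (Set.range x))) :
    (Set.range fun i => v (x i)).Finite := by
  classical
  by_contra hinf
  set M := Submodule.span K (Set.range x)
  set n := Module.finrank K M
  -- get n+1 indices with pairwise distinct values
  have e := Set.Infinite.natEmbedding _ hinf
  have hchoice : ∀ k : ℕ, ∃ i : I, v (x i) = (e k : WithTop ℝ) := fun k => (e k).2
  choose f hf using hchoice
  have hvinj : Function.Injective fun k : Fin (n+1) => v (x (f k)) := by
    intro a b hab
    simp only [hf] at hab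
    exact Fin.ext (by exact_mod_cast e.injective (Subtype.ext hab))
  -- linear independence of fun k => x (f k)
  have hli : LinearIndependent K fun k : Fin (n+1) => x (f (k : ℕ)) := by
    rw [Fintype.linearIndependent_iff]
    intro g hg
    by_contra hgne
    push_neg at hgne
    obtain ⟨j, hj⟩ := hgne
    set S : Finset (Fin (n+1)) := Finset.univ.filter (fun k => g k ≠ 0) with hS
    have hjS : j ∈ S := by simp [hS, hj]
    obtain ⟨j0, hj0S, hmin⟩ := S.exists_min_image (fun k => v (x (f k))) ⟨j, hjS⟩
    have hterm : ∀ k ∈ S, v (g k • x (f (k:ℕ))) = v (x (f (k:ℕ))) := by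
      intro k hk
      have hk0 : g k ≠ 0 := (Finset.mem_filter.mp hk).2
      rw [Algebra.smul_def, hmul, htriv _ hk0, zero_add]
    have hne : v (x (f (j0:ℕ))) ≠ ⊤ := by simp [h0, hx]
    have hsum : ∑ k ∈ S, g k • x (f (k:ℕ)) = 0 := by
      rw [← hg]
      apply Finset.sum_subset (Finset.subset_univ S)
      intro k _ hk
      simp [hS] at hk
      simp [hk]
    have hlt : v (g j0 • x (f (j0:ℕ))) < v (∑ k ∈ S.erase j0, g k • x (f (k:ℕ))) := by
      rw [hterm j0 hj0S]
      apply val_sum_lt v h0 hmul hadd _ _ _ hne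
      intro k hk
      rw [hterm k (Finset.mem_of_mem_erase hk)]
      rcases (hmin k (Finset.mem_of_mem_erase hk)).lt_or_eq with h | h
      · exact h
      · exact ((Finset.mem_erase.mp hk).1 (hvinj h).symm).elim
    have : v (x (f (j0:ℕ))) = ⊤ := by
      have hre := Finset.add_sum_erase S (fun k => g k • x (f (k:ℕ))) hj0S
      rw [← hterm j0 hj0S, ← val_add_eq v h0 hmul hadd _ _ hlt, hre, hsum,
        (h0 0).mpr rfl]
    exact hne this
  -- lift to M and derive contradiction
  have hmem : ∀ k : Fin (n+1), x (f (k:ℕ)) ∈ M :=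
    fun k => Submodule.subset_span (Set.mem_range_self _)
  have hli' : LinearIndependent K fun k : Fin (n+1) => (⟨x (f (k:ℕ)), hmem k⟩ : M) := by
    apply LinearIndependent.of_comp M.subtype
    exact hli
  have hcard := hli'.fintype_card_le_finrank
  rw [Fintype.card_fin] at hcard
  omega
end

section
/- Let d ≥ 1, m ≥ 1, and let ζ : ℝ^d∖{0} → ℝ satisfy ζ(tx) = t^{−2} ζ(x) for all t ≠ 0 and x ≠ 0. For j = 0, …, m−1, let μ_j = p_j/q_j be rational functions on ℝ^d (p_j, q_j real polynomials in d variables, q_j not identically zero), and let Ω ⊆ ℝ^d∖{0} be the dense open set where all q_j are nonzero. Suppose (i) ζ(x)^m + Σ_{j=0}^{m−1} μ_j(x) ζ(x)^j = 0 for every x ∈ Ω, and (ii) minimality: there is no m' < m and rational functions ν_0,…,ν_{m'−1} such that ζ(x)^{m'} + Σ_{j=0}^{m'−1} ν_j(x) ζ(x)^j = 0 holds for all x in some dense open subset of ℝ^d∖{0}. Then each coefficient is homogeneous: for every 1 ≤ i ≤ m, μ_{m−i}(ty) = t^{−2i} μ_{m−i}(y) for all t ≠ 0 and all y with y, ty ∈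 Ω. -/
open Set MvPolynomial

lemma mp_analytic {n : ℕ} (P : MvPolynomial (Fin n) ℝ) :
    AnalyticOnNhd ℝ (fun x : Fin n → ℝ => eval x P) univ :=
  AnalyticOnNhd.eval_continuousLinearMap (ContinuousLinearMap.id ℝ (Fin n → ℝ)) P

lemma mp_dense {n : ℕ} (P : MvPolynomial (Fin n) ℝ) (hP : P ≠ 0) :
    Dense {x : Fin n → ℝ | eval x P ≠ 0} := by
  by_contra h
  rw [dense_iff_closure_eq] at h
  have : ∃ z : Fin n → ℝ, z ∉ closure {x : Fin n → ℝ | eval x P ≠ 0} := by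
    by_contra h'
    push_neg at h'
    exact h (eq_univ_of_forall h')
  obtain ⟨z, hz⟩ := this
  have hev : (fun x : Fin n → ℝ => eval x P) =ᶠ[nhds z] 0 := by
    have : {x : Fin n → ℝ | eval x P ≠ 0}ᶜ ∈ nhds z := by
      rw [mem_nhds_iff]
      exact ⟨(closure {x : Fin n → ℝ | eval x P ≠ 0})ᶜ,
        compl_subset_compl.2 subset_closure, isClosed_closure.isOpen_compl, hz⟩
    filter_upwards [this] with x hx
    simpa using not_not.1 hx
  have : ∀ x, eval x P = 0 := by
    intro x
    have := (mp_analytic P).eqOn_zero_of_preconnected_of_eventuallyEq_zero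
      isPreconnected_univ (mem_univ z) hev (mem_univ x)
    simpa using this
  exact hP (MvPolynomial.funext (fun x => by simpa using this x))

noncomputable def scaleP {n : ℕ} (t : ℝ) (P : MvPolynomial (Fin n) ℝ) :
    MvPolynomial (Fin n) ℝ :=
  MvPolynomial.bind₁ (fun i => MvPolynomial.C t * MvPolynomial.X i) P

lemma eval_scaleP {n : ℕ} (t : ℝ) (P : MvPolynomial (Fin n) ℝ) (x : Fin n → ℝ) :
    eval x (scaleP t P) = eval (t • x) P := by
  simp only [scaleP]
  rw [show (eval x : MvPolynomial (Fin n) ℝ →+* ℝ) = (aeval x).toRingHom from rfl]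
  rw [show ((aeval x).toRingHom : MvPolynomial (Fin n) ℝ →+* ℝ) ((MvPolynomial.bind₁ (fun i => MvPolynomial.C t * MvPolynomial.X i)) P) = (aeval x) ((MvPolynomial.bind₁ (fun i => MvPolynomial.C t * MvPolynomial.X i)) P) from rfl]
  rw [aeval_bind₁]
  simp [Pi.smul_apply, smul_eq_mul]
  rfl

lemma scaleP_ne_zero {n : ℕ} (t : ℝ) (ht : t ≠ 0) (P : MvPolynomial (Fin n) ℝ)
    (hP : P ≠ 0) : scaleP t P ≠ 0 := by
  intro h
  apply hP
  apply MvPolynomial.funext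
  intro x
  have := congrArg (eval (t⁻¹ • x)) h
  rw [eval_scaleP, smul_smul, mul_inv_cancel₀ ht, one_smul] at this
  simpa using this

/-- If `ζ` is homogeneous of degree `-2` and satisfies a monic polynomial
equation of minimal degree `m` with rational-function coefficients `μ_j = p_j/q_j`
on the dense open set `Ω` where all `q_j` are nonzero, then each coefficient
`μ_{m-i}` is homogeneous of degree `-2i`. -/
theorem minimal_poly_coeff_homogeneous (d m : ℕ) (hd : 1 ≤ d) (hm : 1 ≤ m)
    (ζ : (Fin d → ℝ) → ℝ)
    (hζ : ∀ t : ℝ, t ≠ 0 → ∀ x : Fin d → ℝ, x ≠ 0 →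
      ζ (t • x) = t ^ (-2 : ℤ) * ζ x)
    (p q : Fin m → MvPolynomial (Fin d) ℝ) (hq : ∀ j, q j ≠ 0)
    (Ω : Set (Fin d → ℝ))
    (hΩ : Ω = {x : Fin d → ℝ | x ≠ 0 ∧ ∀ j, MvPolynomial.eval x (q j) ≠ 0})
    (hroot : ∀ x ∈ Ω,
      ζ x ^ m + ∑ j : Fin m,
        (MvPolynomial.eval x (p j) / MvPolynomial.eval x (q j)) * ζ x ^ (j : ℕ) = 0)
    (hmin : ¬ ∃ m' : ℕ, m' < m ∧ ∃ p' q' : Fin m' → MvPolynomial (Fin d) ℝ,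
      (∀ j, q' j ≠ 0) ∧ ∃ D : Set (Fin d → ℝ), IsOpen D ∧
        D ⊆ {x : Fin d → ℝ | x ≠ 0} ∧ {x : Fin d → ℝ | x ≠ 0} ⊆ closure D ∧
        ∀ x ∈ D,
          ζ x ^ m' + ∑ j : Fin m',
            (MvPolynomial.eval x (p' j) / MvPolynomial.eval x (q' j))
              * ζ x ^ (j : ℕ) = 0) :
    ∀ j : Fin m, ∀ t : ℝ, t ≠ 0 → ∀ y : Fin d → ℝ, y ∈ Ω → t • y ∈ Ω →
      MvPolynomial.eval (t • y) (p j) / MvPolynomial.eval (t • y) (q j)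
        = t ^ (-(2 * ((m : ℤ) - (j : ℕ))))
          * (MvPolynomial.eval y (p j) / MvPolynomial.eval y (q j)) := by
  subst hΩ
  intro j₀ t ht y hy hty
  -- the numerator polynomials of the difference of the two equations
  set r : Fin m → MvPolynomial (Fin d) ℝ := fun j =>
    MvPolynomial.C (t ^ (2 * (m - (j : ℕ)))) * scaleP t (p j) * q j
      - p j * scaleP t (q j) with hr
  -- evaluation of r
  have hreval : ∀ (j : Fin m) (x : Fin d → ℝ),
      eval x (r j) = t ^ (2 * (m - (j : ℕ))) * eval (t • x) (p j) * eval x (q j)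
        - eval x (p j) * eval (t • x) (q j) := by
    intro j x
    simp [hr, eval_scaleP]
  -- key power computation
  have key : ∀ (a : ℝ) (jj : ℕ), jj ≤ m →
      t ^ (2 * m) * (t ^ (-2 : ℤ) * a) ^ jj = t ^ (2 * (m - jj)) * a ^ jj := by
    intro a jj hjj
    have h2t : (t : ℝ) ^ (-2 : ℤ) = (t ^ (2 : ℕ))⁻¹ := by
      rw [zpow_neg]; norm_cast
    rw [h2t, mul_pow, inv_pow, ← pow_mul,
      show 2 * (m - jj) = 2 * m - 2 * jj by omega,
      pow_sub₀ t ht (by omega)]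
    field_simp
  -- the difference equation, valid whenever x and t•x are in Ω
  have heq : ∀ x : Fin d → ℝ,
      x ∈ {x : Fin d → ℝ | x ≠ 0 ∧ ∀ j, MvPolynomial.eval x (q j) ≠ 0} →
      t • x ∈ {x : Fin d → ℝ | x ≠ 0 ∧ ∀ j, MvPolynomial.eval x (q j) ≠ 0} →
      ∑ j : Fin m, (eval x (r j) / (eval (t • x) (q j) * eval x (q j))) * ζ x ^ (j : ℕ)
        = 0 := by
    intro x hxΩ htxΩ
    have hx0 : x ≠ 0 := hxΩ.1
    have hxq : ∀ j, eval x (q j) ≠ 0 := hxΩ.2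
    have htxq : ∀ j, eval (t • x) (q j) ≠ 0 := htxΩ.2
    have h1 := hroot x hxΩ
    have h2 := hroot (t • x) htxΩ
    rw [hζ t ht x hx0] at h2
    have h2' : ζ x ^ m + ∑ j : Fin m,
        (t ^ (2 * (m - (j : ℕ))) * (eval (t • x) (p j) / eval (t • x) (q j)))
          * ζ x ^ (j : ℕ) = 0 := by
      have h3 := congrArg (fun z => t ^ (2 * m) * z) h2
      simp only [mul_zero, mul_add, Finset.mul_sum] at h3
      rw [key (ζ x) m le_rfl] at h3
      simp only [Nat.sub_self, mul_zero, pow_zero, one_mul] at h3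
      rw [← h3]
      congr 1
      apply Finset.sum_congr rfl
      intro j _
      rw [mul_left_comm, key (ζ x) (j : ℕ) (le_of_lt j.2)]
      ring
    have hs : ∑ j : Fin m,
        (t ^ (2 * (m - (j : ℕ))) * (eval (t • x) (p j) / eval (t • x) (q j))
          - eval x (p j) / eval x (q j)) * ζ x ^ (j : ℕ) = 0 := by
      simp only [sub_mul, Finset.sum_sub_distrib]
      linarith [h1, h2']
    have hcongr : ∑ j : Fin m,
        (eval x (r j) / (eval (t • x) (q j) * eval x (q j))) * ζ x ^ (j : ℕ)
        = ∑ j : Fin m,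
        (t ^ (2 * (m - (j : ℕ))) * (eval (t • x) (p j) / eval (t • x) (q j))
          - eval x (p j) / eval x (q j)) * ζ x ^ (j : ℕ) := by
      apply Finset.sum_congr rfl
      intro j _
      congr 1
      rw [hreval]
      field_simp [htxq j, hxq j]
    rw [hcongr]
    exact hs
  -- all the r j are the zero polynomial
  have hall : ∀ j, r j = 0 := by
    by_contra hno
    push_neg at hno
    set S : Finset (Fin m) := Finset.univ.filter (fun j => r j ≠ 0) with hS
    have hSne : S.Nonempty := by
      obtain ⟨j, hj⟩ := hno
      exact ⟨j, by simp [hS, hj]⟩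
    set js : Fin m := S.max' hSne with hjs
    have hjsmem : r js ≠ 0 := by
      have := S.max'_mem hSne
      simp only [hS, Finset.mem_filter] at this
      exact this.2
    have hmax : ∀ j : Fin m, (js : ℕ) < (j : ℕ) → r j = 0 := by
      intro j hj
      by_contra hrj
      have : j ∈ S := by simp [hS, hrj]
      have := S.le_max' j this
      omega
    -- build contradiction with hmin
    set m' : ℕ := (js : ℕ) with hm'
    have hm'm : m' < m := js.2
    set emb : Fin m' → Fin m := fun j => ⟨(j : ℕ), lt_trans j.2 js.2⟩ with hemb
    set p' : Fin m' → MvPolynomial (Fin d) ℝ := fun j =>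
      r (emb j) * scaleP t (q js) * q js with hp'
    set q' : Fin m' → MvPolynomial (Fin d) ℝ := fun j =>
      r js * scaleP t (q (emb j)) * q (emb j) with hq'def
    have hq' : ∀ j, q' j ≠ 0 := fun j =>
      mul_ne_zero (mul_ne_zero hjsmem (scaleP_ne_zero t ht _ (hq _))) (hq _)
    set P : MvPolynomial (Fin d) ℝ :=
      r js * ∏ j : Fin m, (q j * scaleP t (q j)) with hP
    have hPne : P ≠ 0 := by
      apply mul_ne_zero hjsmem
      rw [Finset.prod_ne_zero_iff]
      exact fun j _ => mul_ne_zero (hq j) (scaleP_ne_zero t ht _ (hq j))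
    set D : Set (Fin d → ℝ) := {x | x ≠ 0 ∧ eval x P ≠ 0} with hD
    have hDopen : IsOpen D := by
      have : D = {(0 : Fin d → ℝ)}ᶜ ∩ ((fun x => eval x P) ⁻¹' {(0:ℝ)}ᶜ) := by
        ext x; simp [hD, and_comm]
      rw [this]
      exact (isOpen_compl_singleton).inter
        (isOpen_compl_singleton.preimage (MvPolynomial.continuous_eval P))
    have hDsub : D ⊆ {x : Fin d → ℝ | x ≠ 0} := fun x hx => hx.1
    have hDdense : {x : Fin d → ℝ | x ≠ 0} ⊆ closure D := by
      haveI : Nonempty (Fin d) := ⟨⟨0, hd⟩⟩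
      haveI : Nontrivial (Fin d → ℝ) := inferInstance
      haveI := Module.punctured_nhds_neBot ℝ (Fin d → ℝ) 0
      have h1 : Dense ({(0 : Fin d → ℝ)}ᶜ : Set (Fin d → ℝ)) := dense_compl_singleton 0
      have h2 : Dense {x : Fin d → ℝ | eval x P ≠ 0} := mp_dense P hPne
      have hDense : Dense D := by
        have heqD : D = {x : Fin d → ℝ | eval x P ≠ 0} ∩ {(0 : Fin d → ℝ)}ᶜ := by
          ext x
          constructor
          · rintro ⟨h1', h2'⟩; exact ⟨h2', h1'⟩
          · rintro ⟨h1', h2'⟩; exact ⟨h2', h1'⟩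
        rw [heqD]
        exact h2.inter_of_isOpen_right h1 isOpen_compl_singleton
      intro x _
      exact hDense x
    apply hmin
    refine ⟨m', hm'm, p', q', hq', D, hDopen, hDsub, hDdense, ?_⟩
    intro x hx
    have hx0 : x ≠ 0 := hx.1
    have hxP := hx.2
    -- extract nonvanishing at x
    have hPx : eval x P
        = eval x (r js) * ∏ j : Fin m, (eval x (q j) * eval x (scaleP t (q j))) := by
      rw [hP, map_mul, map_prod]
      simp only [map_mul]
    rw [hPx, mul_ne_zero_iff, Finset.prod_ne_zero_iff] at hxP
    have hxq : ∀ j, eval x (q j) ≠ 0 := fun j =>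
      (mul_ne_zero_iff.1 (hxP.2 j (Finset.mem_univ j))).1
    have htxq : ∀ j, eval (t • x) (q j) ≠ 0 := fun j => by
      have := (mul_ne_zero_iff.1 (hxP.2 j (Finset.mem_univ j))).2
      rwa [eval_scaleP] at this
    have hrjs : eval x (r js) ≠ 0 := hxP.1
    have hxΩ : x ∈ {x : Fin d → ℝ | x ≠ 0 ∧ ∀ j, eval x (q j) ≠ 0} := ⟨hx0, hxq⟩
    have htxΩ : t • x ∈ {x : Fin d → ℝ | x ≠ 0 ∧ ∀ j, eval x (q j) ≠ 0} :=
      ⟨smul_ne_zero ht hx0, htxq⟩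
    have hsum := heq x hxΩ htxΩ
    -- coefficients as real numbers
    set c : Fin m → ℝ := fun j => eval x (r j) / (eval (t • x) (q j) * eval x (q j))
      with hc
    have hcjs : c js ≠ 0 :=
      div_ne_zero hrjs (mul_ne_zero (htxq js) (hxq js))
    have hczero : ∀ j : Fin m, m' < (j : ℕ) → c j = 0 := by
      intro j hj
      simp [hc, hmax j hj]
    -- ℕ-indexed coefficients
    set cn : ℕ → ℝ := fun n => if h : n < m then c ⟨n, h⟩ else 0 with hcn
    have hcnj : ∀ (n : ℕ) (h : n < m), cn n = c ⟨n, h⟩ := by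
      intro n h
      simp only [hcn]
      rw [dif_pos h]
    have hsum' : ∑ n ∈ Finset.range m, cn n * ζ x ^ n = 0 := by
      rw [← Fin.sum_univ_eq_sum_range (fun n => cn n * ζ x ^ n) m]
      rw [← hsum]
      apply Finset.sum_congr rfl
      intro j _
      congr 1
      rw [hcnj (j : ℕ) j.2]
    have hsum'' : ∑ n ∈ Finset.range (m' + 1), cn n * ζ x ^ n = 0 := by
      rw [← hsum']
      apply Finset.sum_subset (Finset.range_subset_range.2 (by omega))
      intro n hn hn'
      simp only [Finset.mem_range] at hn hn'
      have hz : cn n = 0 := by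
        rw [hcnj n hn]
        exact hczero ⟨n, hn⟩ (show m' < n by omega)
      rw [hz, zero_mul]
    rw [Finset.sum_range_succ] at hsum''
    have hcnm' : cn m' = c js := by
      rw [hcnj m' hm'm]
    -- the coefficients of the lower-degree relation
    have hcoef : ∀ j : Fin m', eval x (p' j) / eval x (q' j) = cn (j : ℕ) / c js := by
      intro j
      have hjm : (j : ℕ) < m := lt_trans j.2 js.2
      have h1 : eval x (p' j) = eval x (r (emb j)) * eval (t • x) (q js) * eval x (q js) := by
        simp only [hp', map_mul, eval_scaleP]
      have h2 : eval x (q' j) = eval x (r js) * eval (t • x) (q (emb j)) * eval x (q (emb j)) := by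
        simp only [hq'def, map_mul, eval_scaleP]
      have h3 : cn (j : ℕ) = c (emb j) := hcnj (j : ℕ) hjm
      have hcval : ∀ k : Fin m, c k = eval x (r k) / (eval (t • x) (q k) * eval x (q k)) :=
        fun k => rfl
      rw [h1, h2, h3, hcval (emb j), hcval js]
      rw [div_div_div_eq]
      ring
    have hgoal : ∑ j : Fin m', (eval x (p' j) / eval x (q' j)) * ζ x ^ (j : ℕ)
        = ∑ n ∈ Finset.range m', (cn n / c js) * ζ x ^ n := by
      rw [← Fin.sum_univ_eq_sum_range (fun n => (cn n / c js) * ζ x ^ n) m']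
      exact Finset.sum_congr rfl fun j _ => by rw [hcoef]
    rw [hgoal]
    have hmul : c js * (ζ x ^ m' + ∑ n ∈ Finset.range m', (cn n / c js) * ζ x ^ n) = 0 := by
      rw [mul_add, Finset.mul_sum]
      have : ∀ n ∈ Finset.range m', c js * ((cn n / c js) * ζ x ^ n) = cn n * ζ x ^ n := by
        intro n _
        rw [div_eq_mul_inv,
          show c js * (cn n * (c js)⁻¹ * ζ x ^ n) = (c js * (c js)⁻¹) * (cn n * ζ x ^ n) from by
            ring,
          mul_inv_cancel₀ hcjs, one_mul]
      rw [Finset.sum_congr rfl this]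
      rw [← hcnm']
      linarith [hsum'']
    exact (mul_eq_zero.mp hmul).resolve_left hcjs
  -- conclude homogeneity at the point y from r j₀ = 0
  have h0 : eval y (r j₀) = 0 := by rw [hall j₀]; simp
  rw [hreval] at h0
  have hyq : eval y (q j₀) ≠ 0 := hy.2 j₀
  have htyq : eval (t • y) (q j₀) ≠ 0 := hty.2 j₀
  have hpow : t ^ (-(2 * ((m : ℤ) - (j₀ : ℕ)))) = (t ^ (2 * (m - (j₀ : ℕ))) : ℝ)⁻¹ := by
    have hle : (j₀ : ℕ) ≤ m := le_of_lt j₀.2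
    rw [show -(2 * ((m : ℤ) - (j₀ : ℕ))) = -((2 * (m - (j₀ : ℕ)) : ℕ) : ℤ) by
      push_cast [hle]; ring]
    rw [zpow_neg, zpow_natCast]
  rw [hpow]
  have htp : (t ^ (2 * (m - (j₀ : ℕ))) : ℝ) ≠ 0 := pow_ne_zero _ ht
  field_simp
  linear_combination h0
end
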